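/- arXiv:2510.16748 — 4 statements merged into one kernel-verified Lean document; each statement's English description precedes it below -/
import Mathlib

section
/- Let n ≥ 2 and let Γ ⊂ ℝⁿ be an open convex cone satisfying Γ + Γₙ ⊂ Γ, where Γₙ = {λ ∈ ℝⁿ : λᵢ > 0 for all i}. Let f : Γ → ℝ be continuously differentiable and concave on Γ, with all partial derivatives fᵢ(λ) = ∂f/∂λᵢ strictly positive on Γ. Suppose there is a constant c > 0 such that f(λ + τ) − f(λ) ≥ c·(τ₁·τ₂·⋯·τₙ)^{1/n} for all λ ∈ Γ and all τ ∈ Γₙ. Then for every λ ∈ Γ one has ∏_{i=1}^{n} fᵢ(λ) ≥ (c/n)ⁿ. -/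
/-!
Put `τᵢ = 1 / fᵢ(λ)`. By concavity `f` lies below its tangent plane at `λ`, so
`f(λ + τ) - f(λ) ≤ ∑ᵢ fᵢ(λ) τᵢ = n`, while the hypothesis bounds the same increment below by
`c (∏ᵢ τᵢ)^(1/n) = c (∏ᵢ fᵢ(λ))^(-1/n)`. Comparing gives `(∏ᵢ fᵢ(λ))^(1/n) ≥ c / n`.
-/

open AffineMap in
theorem ConcaveOn.sub_le_of_hasFDerivAt {E : Type*} [NormedAddCommGroup E] [NormedSpace ℝ E]
    {s : Set E} {f : E → ℝ} {L : E →L[ℝ] ℝ} {x y : E}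
    (hf : ConcaveOn ℝ s f) (hx : x ∈ s) (hy : y ∈ s) (hL : HasFDerivAt f L x) :
    f y - f x ≤ L (y - x) := by
  have hline : ConcaveOn ℝ (lineMap x y ⁻¹' s) (f ∘ lineMap x y) := hf.comp_affineMap _
  have hderiv : HasDerivAt (f ∘ lineMap x y) (L (y - x)) (0 : ℝ) := by
    refine HasFDerivAt.comp_hasDerivAt _ ?_ hasDerivAt_lineMap
    simpa using hL
  simpa [slope_def_field] using
    hline.slope_le_of_hasDerivAt (by simpa using hx) (by simpa using hy) one_pos hderiv

theorem LinearMap.map_inv_apply_single_eq_card {ι K : Type*} [Fintype ι] [DecidableEq ι] [Field K]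
    (L : (ι → K) →ₗ[K] K) (hL : ∀ i, L (Pi.single i 1) ≠ 0) :
    L (fun i => (L (Pi.single i 1))⁻¹) = Fintype.card ι := by
  conv_lhs => rw [pi_eq_sum_univ' (fun i => (L (Pi.single i 1))⁻¹)]
  simp [map_sum, hL]

theorem Real.div_pow_le_of_mul_inv_rpow_le {n : ℕ} (hn : n ≠ 0) {c P : ℝ} (hc : 0 ≤ c)
    (hP : 0 < P) (h : c * P⁻¹ ^ ((1 : ℝ) / n) ≤ n) : (c / n) ^ n ≤ P := by
  have hroot : c / n ≤ P ^ ((n : ℝ)⁻¹) := by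
    rw [one_div, Real.inv_rpow hP.le, ← div_eq_mul_inv] at h
    rwa [div_le_iff₀ (by positivity), mul_comm, ← div_le_iff₀ (by positivity)]
  calc (c / n) ^ n ≤ (P ^ ((n : ℝ)⁻¹)) ^ n := by gcongr
    _ = P := Real.rpow_inv_natCast_pow hP.le hn

theorem stmt_0_general (n : ℕ) (hn : 2 ≤ n) (Γ : Set (Fin n → ℝ))
    (hΓadd : ∀ x ∈ Γ, ∀ τ : Fin n → ℝ, (∀ i, 0 < τ i) → x + τ ∈ Γ)
    (f : (Fin n → ℝ) → ℝ) (f' : (Fin n → ℝ) → ((Fin n → ℝ) →L[ℝ] ℝ))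
    (hf' : ∀ x ∈ Γ, HasFDerivAt f (f' x) x)
    (hconc : ConcaveOn ℝ Γ f)
    (hpos : ∀ x ∈ Γ, ∀ i, 0 < f' x (Pi.single i 1))
    (c : ℝ) (hc : 0 < c)
    (hineq : ∀ x ∈ Γ, ∀ τ : Fin n → ℝ, (∀ i, 0 < τ i) →
      f (x + τ) - f x ≥ c * (∏ i, τ i) ^ ((1 : ℝ) / n)) :
    ∀ x ∈ Γ, (∏ i, f' x (Pi.single i 1)) ≥ (c / n) ^ n := by
  intro x hx
  set τ : Fin n → ℝ := fun i => (f' x (Pi.single i 1))⁻¹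
  have hτ : ∀ i, 0 < τ i := fun i => inv_pos.mpr (hpos x hx i)
  have hupper : f (x + τ) - f x ≤ n := by
    have hτ_eval : f' x τ = n := by
      simpa using (f' x).toLinearMap.map_inv_apply_single_eq_card fun i => (hpos x hx i).ne'
    simpa [hτ_eval] using hconc.sub_le_of_hasFDerivAt hx (hΓadd x hx τ hτ) (hf' x hx)
  have hlower := hineq x hx τ hτ
  rw [Finset.prod_inv_distrib] at hlower
  exact Real.div_pow_le_of_mul_inv_rpow_le (by omega) hc.le
    (Finset.prod_pos fun i _ => hpos x hx i) (hlower.le.trans hupper)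

/-- **Lemma 2.5 (forward direction).** If `f : Γ → ℝ` is a `C¹`, concave function on an
open convex cone `Γ ⊆ ℝⁿ` with `Γ + Γₙ ⊆ Γ`, all of whose partial derivatives are
strictly positive, and `f (λ + τ) - f λ ≥ c (τ₁ ⋯ τₙ)^(1/n)` for all `λ ∈ Γ`, `τ ∈ Γₙ`,
then `∏ᵢ fᵢ(λ) ≥ (c/n)ⁿ` on `Γ`. -/
theorem stmt_0 (n : ℕ) (hn : 2 ≤ n) (Γ : Set (Fin n → ℝ))
    (hΓopen : IsOpen Γ)
    (hΓconvex : Convex ℝ Γ)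
    (hΓcone : ∀ t : ℝ, 0 < t → ∀ x ∈ Γ, t • x ∈ Γ)
    (hΓadd : ∀ x ∈ Γ, ∀ τ : Fin n → ℝ, (∀ i, 0 < τ i) → x + τ ∈ Γ)
    (f : (Fin n → ℝ) → ℝ) (f' : (Fin n → ℝ) → ((Fin n → ℝ) →L[ℝ] ℝ))
    (hf' : ∀ x ∈ Γ, HasFDerivAt f (f' x) x)
    (hf'cont : ContinuousOn f' Γ)
    (hconc : ConcaveOn ℝ Γ f)
    (hpos : ∀ x ∈ Γ, ∀ i, 0 < f' x (Pi.single i 1))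
    (c : ℝ) (hc : 0 < c)
    (hineq : ∀ x ∈ Γ, ∀ τ : Fin n → ℝ, (∀ i, 0 < τ i) →
      f (x + τ) - f x ≥ c * (∏ i, τ i) ^ ((1 : ℝ) / n)) :
    ∀ x ∈ Γ, (∏ i, f' x (Pi.single i 1)) ≥ (c / n) ^ n :=
  stmt_0_general n hn Γ hΓadd f f' hf' hconc hpos c hc hineq
end

section
/- Let n ≥ 2 and let Γ ⊂ ℝⁿ be an open convex cone satisfying Γ + Γₙ ⊂ Γ, where Γₙ = {λ ∈ ℝⁿ : λᵢ > 0 for all i}. Let f : Γ → ℝ be continuously differentiable with all partial derivatives fᵢ(λ) = ∂f/∂λᵢ strictly positive on Γ, and suppose there is a constant c' > 0 such that ∏_{i=1}^{n} fᵢ(λ) ≥ c' for all λ ∈ Γ. Then for all λ ∈ Γ and all τ ∈ Γₙ one has f(λ + τ) − f(λ) ≥ (c')^{1/n} · (τ₁·τ₂·⋯·τₙ)^{1/n}. -/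
/-! By the mean value theorem on the segment from `λ` to `λ + τ`, which lies in `Γ`,
`f (λ + τ) - f λ = ∑ᵢ fᵢ(ξ) τᵢ` for some `ξ ∈ Γ`. By AM-GM this sum is at least
`n (∏ᵢ fᵢ(ξ) τᵢ)^(1/n) ≥ n (c')^(1/n) (∏ᵢ τᵢ)^(1/n)`. -/

open Finset

theorem Real.prod_rpow_one_div_card_le_sum_div_card {ι : Type*} [Fintype ι] [Nonempty ι]
    {a : ι → ℝ} (ha : ∀ i, 0 ≤ a i) :
    (∏ i, a i) ^ ((1 : ℝ) / Fintype.card ι) ≤ (∑ i, a i) / Fintype.card ι := by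
  simpa using Real.geom_mean_le_arith_mean univ (fun _ ↦ 1) a (fun _ _ ↦ zero_le_one)
    (by simp [Fintype.card_pos]) (fun i _ ↦ ha i)

theorem LinearMap.apply_eq_sum_mul_single {ι : Type*} [Fintype ι] [DecidableEq ι]
    (φ : (ι → ℝ) →ₗ[ℝ] ℝ) (v : ι → ℝ) :
    φ v = ∑ i, φ (Pi.single i 1) * v i := by
  conv_lhs => rw [← univ_sum_single v]
  refine (map_sum φ _ _).trans (sum_congr rfl fun i _ ↦ ?_)
  rw [mul_comm, ← smul_eq_mul, ← map_smul, ← Pi.single_smul', smul_eq_mul, mul_one]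

theorem rpow_mul_prod_rpow_le_apply_div_card {ι : Type*} [Fintype ι] [DecidableEq ι]
    [Nonempty ι] (φ : (ι → ℝ) →ₗ[ℝ] ℝ) (hφ : ∀ i, 0 ≤ φ (Pi.single i 1)) {c : ℝ} (hc : 0 ≤ c)
    (hcφ : c ≤ ∏ i, φ (Pi.single i 1)) {τ : ι → ℝ} (hτ : ∀ i, 0 ≤ τ i) :
    c ^ ((1 : ℝ) / Fintype.card ι) * (∏ i, τ i) ^ ((1 : ℝ) / Fintype.card ι) ≤
      φ τ / Fintype.card ι := by
  have hτ₀ : 0 ≤ ∏ i, τ i := prod_nonneg fun i _ ↦ hτ i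
  calc c ^ ((1 : ℝ) / Fintype.card ι) * (∏ i, τ i) ^ ((1 : ℝ) / Fintype.card ι)
      = (c * ∏ i, τ i) ^ ((1 : ℝ) / Fintype.card ι) :=
        (Real.mul_rpow hc hτ₀).symm
    _ ≤ (∏ i, φ (Pi.single i 1) * τ i) ^ ((1 : ℝ) / Fintype.card ι) := by
        rw [prod_mul_distrib]
        gcongr
    _ ≤ (∑ i, φ (Pi.single i 1) * τ i) / Fintype.card ι :=
        Real.prod_rpow_one_div_card_le_sum_div_card fun i ↦ mul_nonneg (hφ i) (hτ i)
    _ = φ τ / Fintype.card ι := by rw [φ.apply_eq_sum_mul_single]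

theorem stmt_1_general (n : ℕ) (hn : 2 ≤ n) (Γ : Set (Fin n → ℝ))
    (hΓconvex : Convex ℝ Γ)
    (hΓadd : ∀ x ∈ Γ, ∀ τ : Fin n → ℝ, (∀ i, 0 < τ i) → x + τ ∈ Γ)
    (f : (Fin n → ℝ) → ℝ) (f' : (Fin n → ℝ) → ((Fin n → ℝ) →L[ℝ] ℝ))
    (hf' : ∀ x ∈ Γ, HasFDerivAt f (f' x) x)
    (hpos : ∀ x ∈ Γ, ∀ i, 0 < f' x (Pi.single i 1))
    (c' : ℝ) (hc' : 0 < c')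
    (hlow : ∀ x ∈ Γ, (∏ i, f' x (Pi.single i 1)) ≥ c') :
    ∀ x ∈ Γ, ∀ τ : Fin n → ℝ, (∀ i, 0 < τ i) →
      f (x + τ) - f x ≥ c' ^ ((1 : ℝ) / n) * (∏ i, τ i) ^ ((1 : ℝ) / n) := by
  intro x hx τ hτ
  have hxτ : x + τ ∈ Γ := hΓadd x hx τ hτ
  obtain ⟨ξ, hξ, hmvt⟩ :=
    domain_mvt (fun y hy ↦ (hf' y hy).hasFDerivWithinAt) hΓconvex hx hxτ
  replace hξ : ξ ∈ Γ := hΓconvex.segment_subset hx hxτ hξ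
  have : NeZero n := ⟨by omega⟩
  have hamgm := rpow_mul_prod_rpow_le_apply_div_card (f' ξ).toLinearMap
    (fun i ↦ (hpos ξ hξ i).le) hc'.le (hlow ξ hξ) (fun i ↦ (hτ i).le)
  rw [Fintype.card_fin] at hamgm
  rw [hmvt, add_sub_cancel_left, ge_iff_le]
  refine hamgm.trans (div_le_self ?_ (by exact_mod_cast (by omega : 1 ≤ n)))
  rw [(f' ξ).toLinearMap.apply_eq_sum_mul_single]
  exact sum_nonneg fun i _ ↦ mul_nonneg (hpos ξ hξ i).le (hτ i).le

/-- **Lemma 2.5 (converse direction).** If `f : Γ → ℝ` is `C¹` on an open convex cone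
`Γ ⊆ ℝⁿ` with `Γ + Γₙ ⊆ Γ`, all of whose partial derivatives are strictly positive, and
`∏ᵢ fᵢ(λ) ≥ c'` on `Γ`, then `f (λ + τ) - f λ ≥ (c')^(1/n) (τ₁ ⋯ τₙ)^(1/n)` for all
`λ ∈ Γ` and `τ ∈ Γₙ`. -/
theorem stmt_1 (n : ℕ) (hn : 2 ≤ n) (Γ : Set (Fin n → ℝ))
    (hΓopen : IsOpen Γ)
    (hΓconvex : Convex ℝ Γ)
    (hΓcone : ∀ t : ℝ, 0 < t → ∀ x ∈ Γ, t • x ∈ Γ)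
    (hΓadd : ∀ x ∈ Γ, ∀ τ : Fin n → ℝ, (∀ i, 0 < τ i) → x + τ ∈ Γ)
    (f : (Fin n → ℝ) → ℝ) (f' : (Fin n → ℝ) → ((Fin n → ℝ) →L[ℝ] ℝ))
    (hf' : ∀ x ∈ Γ, HasFDerivAt f (f' x) x)
    (hf'cont : ContinuousOn f' Γ)
    (hpos : ∀ x ∈ Γ, ∀ i, 0 < f' x (Pi.single i 1))
    (c' : ℝ) (hc' : 0 < c')
    (hlow : ∀ x ∈ Γ, (∏ i, f' x (Pi.single i 1)) ≥ c') :
    ∀ x ∈ Γ, ∀ τ : Fin n → ℝ, (∀ i, 0 < τ i) →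
      f (x + τ) - f x ≥ c' ^ ((1 : ℝ) / n) * (∏ i, τ i) ^ ((1 : ℝ) / n) :=
  stmt_1_general n hn Γ hΓconvex hΓadd f f' hf' hpos c' hc' hlow
end

section
/- Let n ≥ 2 and let Γ ⊂ ℝⁿ be an open convex cone, invariant under permutations of the coordinates, with Γₙ ⊂ Γ ⊂ Γ₁, where Γₙ = {λ ∈ ℝⁿ : λᵢ > 0 for all i} and Γ₁ = {λ ∈ ℝⁿ : λ₁ + ⋯ + λₙ > 0}. Let f : Γ → ℝ be continuously differentiable, concave, symmetric (invariant under permutations of the variables), positively homogeneous of degree one (f(tλ) = t·f(λ) for all t > 0 and λ ∈ Γ), with strictly positive partial derivatives and normalized so that f(1,1,…,1) = 1. Then for every λ = (λ₁,…,λₙ) ∈ Γ one has f(λ₁,…,λₙ) ≤ (1/n)·∑_{i=1}^{n} λᵢ. -/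
/-!
Averaging `λ` over the `n` cyclic rotations of its coordinates produces the constant vector
`m • 1` with `m = (1/n) ∑ᵢ λᵢ`. By symmetry `f` takes the value `f λ` at every rotation, so
Jensen's inequality for the concave `f` gives `f λ ≤ f (m • 1)`, and homogeneity together with
`f 1 = 1` turns the right-hand side into `m`.
-/

open Finset

section Rotation

variable {G : Type*} [AddGroup G] [Fintype G]

theorem sum_comp_addRight_eq_const (x : G → ℝ) :
    ∑ g : G, x ∘ Equiv.addRight g = fun _ => ∑ g, x g := by
  funext h
  simp only [Finset.sum_apply, Function.comp_apply, Equiv.coe_addRight]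
  exact Equiv.sum_comp (Equiv.addLeft h) x

theorem ConcaveOn.le_apply_average_of_addRight_invariant [Nonempty G] {s : Set (G → ℝ)}
    {f : (G → ℝ) → ℝ} (hconc : ConcaveOn ℝ s f)
    (hs : ∀ g : G, ∀ x ∈ s, x ∘ Equiv.addRight g ∈ s)
    (hf : ∀ g : G, ∀ x ∈ s, f (x ∘ Equiv.addRight g) = f x) {x : G → ℝ} (hx : x ∈ s) :
    f x ≤ f ((Fintype.card G : ℝ)⁻¹ • fun _ => ∑ g, x g) := by
  have hcard : (0 : ℝ) < Fintype.card G := Nat.cast_pos.mpr Fintype.card_pos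
  have jensen := hconc.le_map_sum (t := univ) (w := fun _ => (Fintype.card G : ℝ)⁻¹)
    (p := fun g => x ∘ Equiv.addRight g) (fun _ _ => by positivity)
    (by simp [hcard.ne']) (fun g _ => hs g x hx)
  calc f x = ∑ g : G, (Fintype.card G : ℝ)⁻¹ • f (x ∘ Equiv.addRight g) := by
        simp only [hf _ x hx, Finset.sum_const, Finset.card_univ, nsmul_eq_mul, smul_eq_mul]
        field_simp
    _ ≤ f (∑ g : G, (Fintype.card G : ℝ)⁻¹ • x ∘ Equiv.addRight g) := jensen
    _ = f ((Fintype.card G : ℝ)⁻¹ • fun _ => ∑ g, x g) := by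
        rw [← Finset.smul_sum, sum_comp_addRight_eq_const]

end Rotation

theorem stmt_2_general (n : ℕ) (hn : 2 ≤ n) (Γ : Set (Fin n → ℝ))
    (hΓperm : ∀ σ : Equiv.Perm (Fin n), ∀ x ∈ Γ, (x ∘ σ) ∈ Γ)
    (hΓn : {x : Fin n → ℝ | ∀ i, 0 < x i} ⊆ Γ)
    (hΓ1 : Γ ⊆ {x : Fin n → ℝ | 0 < ∑ i, x i})
    (f : (Fin n → ℝ) → ℝ)
    (hconc : ConcaveOn ℝ Γ f)
    (hsym : ∀ σ : Equiv.Perm (Fin n), ∀ x ∈ Γ, f (x ∘ σ) = f x)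
    (hhomog : ∀ t : ℝ, 0 < t → ∀ x ∈ Γ, f (t • x) = t * f x)
    (hnorm : f (fun _ => 1) = 1) :
    ∀ x ∈ Γ, f x ≤ (1 / n) * ∑ i, x i := by
  intro x hx
  have : NeZero n := ⟨by omega⟩
  set m : ℝ := (1 / n) * ∑ i, x i
  have hm : 0 < m := mul_pos (by positivity) (hΓ1 hx)
  have hmean :
      ((Fintype.card (Fin n) : ℝ)⁻¹ • fun _ => ∑ i, x i) = m • fun _ : Fin n => (1 : ℝ) := by
    funext i
    simp [m]
  calc f x ≤ f (m • fun _ => 1) := by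
        rw [← hmean]
        exact hconc.le_apply_average_of_addRight_invariant (fun _ => hΓperm _)
          (fun _ => hsym _) hx
    _ = m := by rw [hhomog m hm _ (hΓn fun _ => one_pos), hnorm, mul_one]

/-- **Urbas' inequality (Lemma 2.6).** A concave, symmetric, positively 1-homogeneous,
`C¹` elliptic operator `f` on an open convex invariant cone `Γ` with `Γₙ ⊆ Γ ⊆ Γ₁`,
normalized by `f(1,…,1) = 1`, satisfies `f(λ) ≤ (1/n) ∑ᵢ λᵢ` for every `λ ∈ Γ`. -/
theorem stmt_2 (n : ℕ) (hn : 2 ≤ n) (Γ : Set (Fin n → ℝ))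
    (hΓopen : IsOpen Γ)
    (hΓconvex : Convex ℝ Γ)
    (hΓcone : ∀ t : ℝ, 0 < t → ∀ x ∈ Γ, t • x ∈ Γ)
    (hΓperm : ∀ σ : Equiv.Perm (Fin n), ∀ x ∈ Γ, (x ∘ σ) ∈ Γ)
    (hΓn : {x : Fin n → ℝ | ∀ i, 0 < x i} ⊆ Γ)
    (hΓ1 : Γ ⊆ {x : Fin n → ℝ | 0 < ∑ i, x i})
    (f : (Fin n → ℝ) → ℝ) (f' : (Fin n → ℝ) → ((Fin n → ℝ) →L[ℝ] ℝ))
    (hf' : ∀ x ∈ Γ, HasFDerivAt f (f' x) x)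
    (hf'cont : ContinuousOn f' Γ)
    (hconc : ConcaveOn ℝ Γ f)
    (hsym : ∀ σ : Equiv.Perm (Fin n), ∀ x ∈ Γ, f (x ∘ σ) = f x)
    (hhomog : ∀ t : ℝ, 0 < t → ∀ x ∈ Γ, f (t • x) = t * f x)
    (hpos : ∀ x ∈ Γ, ∀ i, 0 < f' x (Pi.single i 1))
    (hnorm : f (fun _ => 1) = 1) :
    ∀ x ∈ Γ, f x ≤ (1 / n) * ∑ i, x i :=
  stmt_2_general n hn Γ hΓperm hΓn hΓ1 f hconc hsym hhomog hnorm
end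

section
/- Fix integers n ≥ 2 and 1 ≤ p ≤ n. Let 𝒫ₚ = {λ ∈ ℝⁿ : λ_{i₁} + λ_{i₂} + ⋯ + λ_{iₚ} > 0 for all 1 ≤ i₁ < i₂ < ⋯ < iₚ ≤ n}, and define the p-Monge–Ampère polynomial 𝓜ₚ(λ) = ∏_{1 ≤ i₁ < i₂ < ⋯ < iₚ ≤ n} (λ_{i₁} + λ_{i₂} + ⋯ + λ_{iₚ}). Then the normalized operator f = 𝓜ₚ^{1/\binom{n}{p}} satisfies Condition (T) on 𝒫ₚ: there exists a constant 𝒯 > 0, depending only on n and p, such that ∏_{i=1}^{n} ∂f/∂λᵢ(λ) ≥ 𝒯 for all λ ∈ 𝒫ₚ. -/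
open Finset

/-- The `p`-Monge–Ampère polynomial `𝓜ₚ(λ) = ∏_{i₁<⋯<iₚ} (λ_{i₁} + ⋯ + λ_{iₚ})`. -/
noncomputable def pMongeAmpere (n p : ℕ) (x : Fin n → ℝ) : ℝ :=
  ∏ s ∈ Finset.powersetCard p (Finset.univ : Finset (Fin n)), ∑ i ∈ s, x i

/-- The cone `𝒫ₚ = {λ : λ_{i₁} + ⋯ + λ_{iₚ} > 0 for all i₁ < ⋯ < iₚ}`. -/
def pCone (n p : ℕ) : Set (Fin n → ℝ) :=
  {x | ∀ s ∈ Finset.powersetCard p (Finset.univ : Finset (Fin n)), 0 < ∑ i ∈ s, x i}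

/-!
Write `σ_s = ∑_{j ∈ s} λ_j`, `N = (n choose p)` and `k = (n-1 choose p-1)`, the number of `p`-subsets
containing a given index. Then `∂ᵢf = (f / N) ∑_{s ∋ i} σ_s⁻¹`, and AM–GM over the `k` subsets
containing `i` gives `∑_{s ∋ i} σ_s⁻¹ ≥ k (∏_{s ∋ i} σ_s)^(-1/k)`. In the product over `i` every `σ_s`
occurs `p` times, so `∏ᵢ ∂ᵢf ≥ (k/N)ⁿ fⁿ 𝓜ₚ^(-p/k) = (k/N)ⁿ`, because `n k = p N`.
-/

lemma Real.card_mul_prod_rpow_inv_card_le_sum {β : Type*} (t : Finset β) (z : β → ℝ)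
    (hz : ∀ b ∈ t, 0 ≤ z b) :
    #t * (∏ b ∈ t, z b) ^ ((#t : ℝ)⁻¹) ≤ ∑ b ∈ t, z b := by
  rcases t.eq_empty_or_nonempty with rfl | ht
  · simp
  have := Real.geom_mean_le_arith_mean t (fun _ => 1) z (fun _ _ => zero_le_one)
    (by simpa using ht) hz
  simp only [Real.rpow_one, sum_const, nsmul_eq_mul, mul_one, one_mul] at this
  rwa [le_div_iff₀ (by simpa using ht), mul_comm] at this

section

variable {ι : Type*} [Fintype ι] [DecidableEq ι]

lemma card_filter_mem_powersetCard_univ {p : ℕ} (hp : 1 ≤ p) (a : ι) :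
    #{s ∈ powersetCard p univ | a ∈ s} = (Fintype.card ι - 1).choose (p - 1) := by
  simpa [singleton_subset_iff] using
    card_filter_powersetCard_subset {a} univ p (subset_univ _) (by simpa)

lemma prod_prod_filter_mem_eq_prod_pow_card {M : Type*} [CommMonoid M]
    (P : Finset (Finset ι)) (g : Finset ι → M) :
    ∏ i, ∏ s ∈ P with i ∈ s, g s = ∏ s ∈ P, g s ^ #s := by
  simp_rw [prod_filter]
  rw [prod_comm]
  refine prod_congr rfl fun s _ => ?_
  rw [prod_ite_mem univ s fun _ => g s, univ_inter, prod_const]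

lemma pow_mul_prod_rpow_neg_le_prod_sum_inv (P : Finset (Finset ι)) {p k : ℕ}
    (hP : ∀ s ∈ P, #s = p) (hdeg : ∀ i, #{s ∈ P | i ∈ s} = k) (σ : Finset ι → ℝ)
    (hσ : ∀ s ∈ P, 0 < σ s) :
    (k : ℝ) ^ Fintype.card ι * (∏ s ∈ P, σ s) ^ (-(p / k : ℝ)) ≤
      ∏ i, ∑ s ∈ P with i ∈ s, (σ s)⁻¹ := by
  have hσ_inv : ∀ i, ∀ s ∈ {s ∈ P | i ∈ s}, 0 ≤ (σ s)⁻¹ :=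
    fun i s hs => (inv_pos.2 (hσ s (mem_filter.1 hs).1)).le
  have amgm (i : ι) : k * (∏ s ∈ P with i ∈ s, (σ s)⁻¹) ^ (k : ℝ)⁻¹ ≤
      ∑ s ∈ P with i ∈ s, (σ s)⁻¹ := by
    simpa only [hdeg] using Real.card_mul_prod_rpow_inv_card_le_sum _ _ (hσ_inv i)
  have double_count : ∏ i, ∏ s ∈ P with i ∈ s, (σ s)⁻¹ = ((∏ s ∈ P, σ s) ^ p)⁻¹ := by
    rw [prod_prod_filter_mem_eq_prod_pow_card, prod_congr rfl fun s hs => by rw [hP s hs],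
      prod_pow, prod_inv_distrib, inv_pow]
  have hM : 0 < ∏ s ∈ P, σ s := prod_pos hσ
  calc (k : ℝ) ^ Fintype.card ι * (∏ s ∈ P, σ s) ^ (-(p / k : ℝ))
      = ∏ i, k * (∏ s ∈ P with i ∈ s, (σ s)⁻¹) ^ (k : ℝ)⁻¹ := by
        rw [prod_mul_distrib, prod_const, card_univ,
          Real.finsetProd_rpow _ _ fun i _ => prod_nonneg (hσ_inv i), double_count,
          Real.inv_rpow (by positivity), ← Real.rpow_natCast (∏ s ∈ P, σ s) p,
          ← Real.rpow_mul hM.le, Real.rpow_neg hM.le, div_eq_mul_inv]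
    _ ≤ ∏ i, ∑ s ∈ P with i ∈ s, (σ s)⁻¹ :=
        prod_le_prod (fun i _ => mul_nonneg k.cast_nonneg
          (Real.rpow_nonneg (prod_nonneg (hσ_inv i)) _)) fun i _ => amgm i

lemma hasFDerivAt_prod_sum (P : Finset (Finset ι)) (x : ι → ℝ) :
    HasFDerivAt (fun y : ι → ℝ => ∏ s ∈ P, ∑ i ∈ s, y i)
      (∑ s ∈ P, (∏ t ∈ P.erase s, ∑ i ∈ t, x i) •
        ∑ i ∈ s, ContinuousLinearMap.proj (R := ℝ) (φ := fun _ : ι => ℝ) i) x :=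
  HasFDerivAt.finsetProd fun _ _ => HasFDerivAt.fun_sum fun i _ => hasFDerivAt_apply i x

lemma fderiv_prod_sum_apply_single (P : Finset (Finset ι)) {x : ι → ℝ}
    (hx : ∀ s ∈ P, ∑ i ∈ s, x i ≠ 0) (i : ι) :
    fderiv ℝ (fun y : ι → ℝ => ∏ s ∈ P, ∑ j ∈ s, y j) x (Pi.single i 1) =
      (∏ s ∈ P, ∑ j ∈ s, x j) * ∑ s ∈ P with i ∈ s, (∑ j ∈ s, x j)⁻¹ := by
  rw [(hasFDerivAt_prod_sum P x).fderiv, mul_sum, sum_filter]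
  simp only [_root_.sum_apply, smul_apply, ContinuousLinearMap.proj_apply, smul_eq_mul,
    Pi.single_apply, sum_ite_eq', mul_ite, mul_one, mul_zero]
  refine sum_congr rfl fun s hs => ?_
  rw [← mul_prod_erase P (fun t => ∑ j ∈ t, x j) hs, mul_comm _ (∏ t ∈ P.erase s, _),
    mul_assoc, mul_inv_cancel₀ (hx s hs), mul_one]

lemma fderiv_rpow_prod_sum_apply_single (P : Finset (Finset ι)) (c : ℝ) {x : ι → ℝ}
    (hx : ∀ s ∈ P, 0 < ∑ i ∈ s, x i) (i : ι) :
    fderiv ℝ (fun y : ι → ℝ => (∏ s ∈ P, ∑ j ∈ s, y j) ^ c) x (Pi.single i 1) =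
      c * (∏ s ∈ P, ∑ j ∈ s, x j) ^ c * ∑ s ∈ P with i ∈ s, (∑ j ∈ s, x j)⁻¹ := by
  have hM : 0 < ∏ s ∈ P, ∑ j ∈ s, x j := prod_pos hx
  rw [((hasFDerivAt_prod_sum P x).rpow_const (Or.inl hM.ne')).fderiv, smul_apply,
    ← (hasFDerivAt_prod_sum P x).fderiv,
    fderiv_prod_sum_apply_single P (fun s hs => (hx s hs).ne') i, smul_eq_mul,
    Real.rpow_sub_one hM.ne']
  field_simp

end

theorem stmt_6_general (n p : ℕ) (hp1 : 1 ≤ p) (hpn : p ≤ n) :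
    ∃ 𝒯 : ℝ, 0 < 𝒯 ∧
      ∀ x ∈ pCone n p,
        𝒯 ≤ ∏ i, fderiv ℝ
              (fun y : Fin n → ℝ => (pMongeAmpere n p y) ^ ((1 : ℝ) / (n.choose p))) x
              (Pi.single i 1) := by
  have hnk : n * (n - 1).choose (p - 1) = n.choose p * p := by
    obtain ⟨m, rfl⟩ : ∃ m, n = m + 1 := ⟨n - 1, by omega⟩
    obtain ⟨q, rfl⟩ : ∃ q, p = q + 1 := ⟨p - 1, by omega⟩
    exact Nat.add_one_mul_choose_eq m q
  set N := n.choose p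
  set k := (n - 1).choose (p - 1)
  have hN : 0 < N := Nat.choose_pos hpn
  have hk : 0 < k := Nat.choose_pos (by omega)
  refine ⟨((k : ℝ) / N) ^ n, by positivity, fun x hx => ?_⟩
  have hbound := pow_mul_prod_rpow_neg_le_prod_sum_inv _ (fun s hs => (mem_powersetCard.1 hs).2)
    (by simpa using card_filter_mem_powersetCard_univ (ι := Fin n) hp1) _ hx
  simp only [pMongeAmpere, fderiv_rpow_prod_sum_apply_single _ _ hx, prod_mul_distrib, prod_const,
    card_univ, Fintype.card_fin] at hbound ⊢
  set M := ∏ s ∈ powersetCard p univ, ∑ i ∈ s, x i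
  have hM : 0 < M := prod_pos hx
  have hexp : 1 / (N : ℝ) * n + -(p / k : ℝ) = 0 := by
    have hnk' : (n : ℝ) * k = N * p := by exact_mod_cast hnk
    field_simp
    linarith
  calc ((k : ℝ) / N) ^ n
      = (1 / N) ^ n * (M ^ (1 / N : ℝ)) ^ n * (k ^ n * M ^ (-(p / k : ℝ))) := by
        rw [← Real.rpow_natCast (M ^ _), ← Real.rpow_mul hM.le, mul_mul_mul_comm,
          ← Real.rpow_add hM, hexp, Real.rpow_zero]
        ring
    _ ≤ _ := by gcongr

/-- **Condition (T) for the normalized `p`-Monge–Ampère operator (Remark 1.2 (ii)).**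
For `f = 𝓜ₚ^(1/(n choose p))` on the cone `𝒫ₚ` there is a uniform constant `𝒯 > 0`,
depending only on `n` and `p`, with `∏ᵢ ∂f/∂λᵢ(λ) ≥ 𝒯` for all `λ ∈ 𝒫ₚ`. -/
theorem stmt_6 (n p : ℕ) (hn : 2 ≤ n) (hp1 : 1 ≤ p) (hpn : p ≤ n) :
    ∃ 𝒯 : ℝ, 0 < 𝒯 ∧
      ∀ x ∈ pCone n p,
        𝒯 ≤ ∏ i, fderiv ℝ
              (fun y : Fin n → ℝ => (pMongeAmpere n p y) ^ ((1 : ℝ) / (n.choose p))) x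
              (Pi.single i 1) :=
  stmt_6_general n p hp1 hpn
end
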